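/- arXiv:0709.3316 — 5 statements merged into one kernel-verified Lean document; each statement's English description precedes it below -/
import Mathlib

section
/- For every positive integer m and every integer k ≥ 1, the polynomial identity ∑_{n=0}^{k} C(k,n) * y^{n(m+1)} = (1+y^{m+1})^k holds; consequently, differentiating k-1 times and evaluating at y = -1 (where m is even) gives ∑_{n=0}^{k} (-1)^n C(k,n) C(n(m+1), k-1) = 0. -/
/-!
The first identity is the binomial theorem for `(y ^ (m + 1) + 1) ^ k`. For the second, `n ↦ (n * (m + 1)).choose (k - 1)`
is a polynomial in `n` of degree `k - 1` (up to the factor `(k - 1)!` it is a descending Pochhammer symbol), and the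
alternating sum `∑ (-1) ^ n * k.choose n * P n` is, up to sign, the `k`-th forward difference of `P` at `0`, which vanishes
for every polynomial of degree `< k`.
-/

open Polynomial Finset

theorem Polynomial.sum_range_neg_one_pow_mul_choose_mul_eval_eq_zero {R : Type*} [CommRing R]
    {P : R[X]} {k : ℕ} (hP : P.natDegree < k) :
    ∑ n ∈ range (k + 1), (-1 : R) ^ n * k.choose n * P.eval (n : R) = 0 := by
  have hdiff := fwdDiff_iter_eq_sum_shift (1 : R) P.eval k 0
  rw [fwdDiff_iter_eq_zero_of_degree_lt hP, Pi.zero_apply] at hdiff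
  calc ∑ n ∈ range (k + 1), (-1 : R) ^ n * k.choose n * P.eval (n : R)
      = (-1) ^ k * ∑ n ∈ range (k + 1), ((-1 : ℤ) ^ (k - n) * k.choose n) • P.eval (0 + n • 1) := by
        rw [mul_sum]
        refine sum_congr rfl fun n hn ↦ ?_
        have hsign : (-1 : R) ^ k * (-1) ^ (k - n) = (-1) ^ n := by
          rw [← pow_add, show k + (k - n) = n + 2 * (k - n) by grind, pow_add, pow_mul]
          simp
        simp only [zsmul_eq_mul, zero_add, nsmul_eq_mul, mul_one]
        push_cast
        rw [← hsign]
        ring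
    _ = 0 := by rw [← hdiff, mul_zero]

theorem sum_range_neg_one_pow_mul_choose_mul_choose_mul_eq_zero (c : ℕ) {j k : ℕ} (hjk : j < k) :
    ∑ n ∈ range (k + 1), (-1 : ℤ) ^ n * k.choose n * (n * c).choose j = 0 := by
  set P : ℤ[X] := (descPochhammer ℤ j).comp (C (c : ℤ) * X)
  have hP : P.natDegree < k := by
    calc P.natDegree ≤ j * (C (c : ℤ) * X).natDegree := by
          rw [natDegree_comp, descPochhammer_natDegree]
      _ ≤ j * 1 := Nat.mul_le_mul_left j <| (natDegree_C_mul_le _ _).trans natDegree_X_le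
      _ < k := by omega
  have heval (n : ℕ) : P.eval (n : ℤ) = j.factorial * (n * c).choose j := by
    rw [eval_comp, eval_mul, eval_C, eval_X, mul_comm, ← Nat.cast_mul,
      descPochhammer_eval_eq_descFactorial, Nat.descFactorial_eq_factorial_mul_choose, Nat.cast_mul]
  have hsum := sum_range_neg_one_pow_mul_choose_mul_eval_eq_zero hP
  simp only [heval, mul_left_comm _ (j.factorial : ℤ), ← mul_sum] at hsum
  exact (mul_eq_zero.mp hsum).resolve_left (by positivity)

theorem binomial_poly_identity_and_consequence_general (m k : ℕ) (hk : 1 ≤ k) :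
    (∀ y : ℝ, ∑ n ∈ Finset.range (k + 1), (k.choose n : ℝ) * y ^ (n * (m + 1))
        = (1 + y ^ (m + 1)) ^ k) ∧
    (Even m → ∑ n ∈ Finset.range (k + 1),
        (-1 : ℝ) ^ n * (k.choose n : ℝ) * ((n * (m + 1)).choose (k - 1) : ℝ) = 0) := by
  refine ⟨fun y ↦ ?_, fun _ ↦ ?_⟩
  · rw [add_comm 1, add_pow]
    refine sum_congr rfl fun n _ ↦ ?_
    rw [one_pow, mul_one, mul_comm n, pow_mul, mul_comm]
  · exact_mod_cast sum_range_neg_one_pow_mul_choose_mul_choose_mul_eq_zero (m + 1)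
      (show k - 1 < k by omega)

theorem binomial_poly_identity_and_consequence (m k : ℕ) (hm : 0 < m) (hk : 1 ≤ k) :
    (∀ y : ℝ, ∑ n ∈ Finset.range (k + 1), (k.choose n : ℝ) * y ^ (n * (m + 1))
        = (1 + y ^ (m + 1)) ^ k) ∧
    (Even m → ∑ n ∈ Finset.range (k + 1),
        (-1 : ℝ) ^ n * (k.choose n : ℝ) * ((n * (m + 1)).choose (k - 1) : ℝ) = 0) :=
  binomial_poly_identity_and_consequence_general m k hk
end

section
/- Let p be a positive integer, M(p,n) = C(pn+n+1, n)/(pn+n+1), and H_p(x) = ∑_{n≥0} M(p,n)x^n. For every x with 0 ≤ x ≤ p^p/(p+1)^{p+1}, the value y = H_p(x) satisfies x y^{p+1} = y - 1, and H_p(x) is the smallest positive root of this equation. -/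
/-- Generalized Catalan number `M(p,n) = C(pn+n+1, n)/(pn+n+1)` (as a real number). -/
noncomputable def genCatalan (p n : ℕ) : ℝ :=
  (Nat.choose ((p + 1) * n + 1) n : ℝ) / ((p + 1) * n + 1 : ℕ)

/-- The generating function `H_p` of the generalized Catalan numbers. -/
noncomputable def Hgen (p : ℕ) (x : ℝ) : ℝ := ∑' n : ℕ, genCatalan p n * x ^ n

/-!
The generalized Catalan numbers are the Raney numbers `R_{b,1}(n)` with `b = p + 1`, where
`R_{b,a}(n) = a/(bn+a) * C(bn+a, n)`. The Raney numbers satisfy the Pascal-type recursion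
`R_{b,a+1}(n+1) = R_{b,a}(n+1) + R_{b,a+b}(n)`, which yields the convolution identity
`R_{b,1} * R_{b,a} = R_{b,a+1}`. Hence, writing `B(x) = ∑ R_{b,1}(n) xⁿ`, the `a`-th power of `B`
has coefficients `R_{b,a}`, and since `R_{b,1}(n+1) = R_{b,b}(n)` we get `B = 1 + x B^b` wherever `B`
converges.

For `x ≥ 0` and any root `s ≥ 0` of `1 + x s^b = s`, truncating the Cauchy products gives
`S_{N+1} ≤ 1 + x S_N^b` for the partial sums `S_N` of `B`, so `S_N ≤ s` for all `N`. This proves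
convergence of `B(x)` and `B(x) ≤ s` at once; a root exists for `x ≤ p^p/(p+1)^(p+1)` by the
intermediate value theorem on `[1, 1 + 1/p]`.
-/

open Finset

/-- The case `n = 0` is split off so that `raney b 0` is the indicator of `0`, the coefficient
sequence of `B⁰ = 1`. -/
noncomputable def raney (b a n : ℕ) : ℝ :=
  if n = 0 then 1 else a / ((b * n + a : ℕ) : ℝ) * ((b * n + a).choose n : ℝ)

section Raney

variable {b : ℕ}

@[simp]
lemma raney_zero_right (b a : ℕ) : raney b a 0 = 1 := if_pos rfl

@[simp]
lemma raney_zero_succ (b n : ℕ) : raney b 0 (n + 1) = 0 := by simp [raney]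

lemma raney_nonneg (b a n : ℕ) : 0 ≤ raney b a n := by
  unfold raney; split_ifs <;> positivity

lemma raney_of_ne_zero {a : ℕ} (ha : a ≠ 0) (n : ℕ) :
    raney b a n = a / ((b * n + a : ℕ) : ℝ) * ((b * n + a).choose n : ℝ) := by
  rcases eq_or_ne n 0 with rfl | hn
  · simp [ha]
  · exact if_neg hn

lemma raney_succ_succ (hb : 0 < b) (a n : ℕ) :
    raney b (a + 1) (n + 1) = raney b a (n + 1) + raney b (a + b) n := by
  set N := b * n + a + b with hN
  have hNn : n ≤ N := by nlinarith
  have h1 : b * (n + 1) + (a + 1) = N + 1 := by rw [hN]; ring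
  have h2 : b * (n + 1) + a = N := by rw [hN]; ring
  have h3 : b * n + (a + b) = N := by rw [hN]; ring
  have hpascal : ((N + 1) * N.choose n : ℝ) = (N + 1).choose (n + 1) * (n + 1) := by
    exact_mod_cast Nat.add_one_mul_choose_eq N n
  have hsucc : (N.choose (n + 1) * (n + 1) : ℝ) = N.choose n * (N - n) := by
    rw [← Nat.cast_sub hNn]; exact_mod_cast Nat.choose_succ_right_eq N n
  rw [raney_of_ne_zero (a := a + b) (by omega)]
  simp only [raney, n.succ_ne_zero, if_false, h1, h2, h3]
  have hN0 : (N : ℝ) ≠ 0 := by positivity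
  have hNr : (N : ℝ) = b * n + a + b := by rw [hN]; push_cast; ring
  field_simp
  push_cast
  refine mul_right_cancel₀ (n.cast_add_one_ne_zero (R := ℝ)) ?_
  linear_combination (↑a + 1) * ↑N * hpascal.symm - (↑N + 1) * ↑a * hsucc
    + (↑N + 1) * (N.choose n : ℝ) * hNr

lemma raney_one_succ (hb : 0 < b) (n : ℕ) : raney b 1 (n + 1) = raney b b n := by
  simpa using raney_succ_succ hb 0 n

lemma sum_antidiagonal_raney (hb : 0 < b) (a n : ℕ) :
    ∑ kl ∈ antidiagonal n, raney b 1 kl.1 * raney b a kl.2 = raney b (a + 1) n := by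
  induction n generalizing a with
  | zero => simp
  | succ n ihn =>
    have hstep : ∀ a, ∑ kl ∈ antidiagonal (n + 1), raney b 1 kl.1 * raney b (a + 1) kl.2 =
        ∑ kl ∈ antidiagonal (n + 1), raney b 1 kl.1 * raney b a kl.2 +
          ∑ kl ∈ antidiagonal n, raney b 1 kl.1 * raney b (a + b) kl.2 := fun a => by
      simp only [Nat.sum_antidiagonal_succ', raney_succ_succ hb, raney_zero_right, mul_add,
        sum_add_distrib]
      ring
    induction a with
    | zero => simp [Nat.sum_antidiagonal_succ']
    | succ a iha =>
      rw [hstep, iha, ihn, raney_succ_succ hb (a + 1), add_right_comm]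

end Raney

lemma sum_range_sum_antidiagonal_le_mul {R : Type*} [CommSemiring R] [PartialOrder R]
    [IsOrderedRing R] {f g : ℕ → R} (hf : 0 ≤ f) (hg : 0 ≤ g) (N : ℕ) :
    ∑ n ∈ range N, ∑ kl ∈ antidiagonal n, f kl.1 * g kl.2 ≤
      (∑ n ∈ range N, f n) * ∑ n ∈ range N, g n := by
  simp_rw [Nat.sum_antidiagonal_eq_sum_range_succ_mk,
    sum_range_diag_flip (f := fun k l => f k * g l), sum_mul_sum]
  gcongr with k _
  · exact fun _ _ _ => mul_nonneg (hf _) (hg _)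
  · exact Nat.sub_le N k

section RaneySeries

variable {b : ℕ} {x : ℝ}

lemma raney_mul_pow_nonneg (hx : 0 ≤ x) (a : ℕ) : 0 ≤ fun n => raney b a n * x ^ n :=
  fun n => mul_nonneg (raney_nonneg b a n) (pow_nonneg hx n)

lemma sum_antidiagonal_raney_mul_pow (hb : 0 < b) (x : ℝ) (a n : ℕ) :
    ∑ kl ∈ antidiagonal n, raney b 1 kl.1 * x ^ kl.1 * (raney b a kl.2 * x ^ kl.2) =
      raney b (a + 1) n * x ^ n := by
  rw [← sum_antidiagonal_raney hb, sum_mul]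
  refine sum_congr rfl fun kl hkl => ?_
  rw [← mem_antidiagonal.mp hkl, pow_add]
  ring

lemma sum_range_raney_le_pow (hb : 0 < b) (hx : 0 ≤ x) (a N : ℕ) :
    ∑ n ∈ range N, raney b a n * x ^ n ≤ (∑ n ∈ range N, raney b 1 n * x ^ n) ^ a := by
  induction a with
  | zero => cases N <;> simp [sum_range_succ']
  | succ a ih =>
    calc ∑ n ∈ range N, raney b (a + 1) n * x ^ n
        = ∑ n ∈ range N, ∑ kl ∈ antidiagonal n,
            raney b 1 kl.1 * x ^ kl.1 * (raney b a kl.2 * x ^ kl.2) := by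
          simp only [sum_antidiagonal_raney_mul_pow hb]
      _ ≤ (∑ n ∈ range N, raney b 1 n * x ^ n) * ∑ n ∈ range N, raney b a n * x ^ n :=
          sum_range_sum_antidiagonal_le_mul (raney_mul_pow_nonneg hx 1)
            (raney_mul_pow_nonneg hx a) N
      _ ≤ (∑ n ∈ range N, raney b 1 n * x ^ n) ^ (a + 1) := by
          rw [pow_succ']
          gcongr
          exact sum_nonneg fun n _ => raney_mul_pow_nonneg hx 1 n

lemma sum_range_raney_le_of_root (hb : 0 < b) (hx : 0 ≤ x) {y : ℝ} (hy : 0 ≤ y)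
    (hroot : 1 + x * y ^ b = y) (N : ℕ) : ∑ n ∈ range N, raney b 1 n * x ^ n ≤ y := by
  induction N with
  | zero => simpa using hy
  | succ N ih =>
    have hshift : ∀ n, raney b 1 (n + 1) * x ^ (n + 1) = x * (raney b b n * x ^ n) := fun n => by
      rw [raney_one_succ hb, pow_succ]; ring
    have hS : 0 ≤ ∑ n ∈ range N, raney b 1 n * x ^ n :=
      sum_nonneg fun n _ => raney_mul_pow_nonneg hx 1 n
    calc ∑ n ∈ range (N + 1), raney b 1 n * x ^ n
        = 1 + x * ∑ n ∈ range N, raney b b n * x ^ n := by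
          simp only [sum_range_succ', hshift, ← mul_sum, raney_zero_right, pow_zero, mul_one,
            add_comm]
      _ ≤ 1 + x * (∑ n ∈ range N, raney b 1 n * x ^ n) ^ b := by
          gcongr; exact sum_range_raney_le_pow hb hx b N
      _ ≤ 1 + x * y ^ b := by gcongr
      _ = y := hroot

lemma hasSum_raney_mul_pow (hb : 0 < b) (hx : 0 ≤ x)
    (hs : Summable fun n => raney b 1 n * x ^ n) (a : ℕ) :
    HasSum (fun n => raney b a n * x ^ n) ((∑' n, raney b 1 n * x ^ n) ^ a) := by
  induction a with
  | zero =>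
    have hδ : ∀ n ≠ 0, raney b 0 n * x ^ n = 0 := fun n hn => by
      obtain ⟨n, rfl⟩ := Nat.exists_eq_succ_of_ne_zero hn
      simp
    simpa using hasSum_single 0 hδ
  | succ a ih =>
    have hprod := hs.mul_of_nonneg ih.summable (raney_mul_pow_nonneg hx 1)
      (raney_mul_pow_nonneg hx a)
    have hcauchy := (summable_sum_mul_antidiagonal_of_summable_mul
      (f := fun n => raney b 1 n * x ^ n) (g := fun n => raney b a n * x ^ n) hprod).hasSum
    rw [← hs.tsum_mul_tsum_eq_tsum_sum_antidiagonal ih.summable hprod, ih.tsum_eq] at hcauchy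
    simpa only [sum_antidiagonal_raney_mul_pow hb, pow_succ'] using hcauchy

lemma tsum_raney_mul_pow_eq (hb : 0 < b) (hx : 0 ≤ x)
    (hs : Summable fun n => raney b 1 n * x ^ n) :
    ∑' n, raney b 1 n * x ^ n = 1 + x * (∑' n, raney b 1 n * x ^ n) ^ b := by
  conv_lhs => rw [hs.tsum_eq_zero_add]
  rw [← (hasSum_raney_mul_pow hb hx hs b).tsum_eq, ← tsum_mul_left]
  simp only [raney_one_succ hb, raney_zero_right, pow_zero, mul_one, pow_succ]
  congr 1
  exact tsum_congr fun n => by ring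

end RaneySeries

lemma genCatalan_eq_raney (p n : ℕ) : genCatalan p n = raney (p + 1) 1 n := by
  rw [genCatalan, raney_of_ne_zero one_ne_zero, Nat.cast_one, one_div_mul_eq_div]

lemma Hgen_eq_tsum_raney (p : ℕ) (x : ℝ) : Hgen p x = ∑' n, raney (p + 1) 1 n * x ^ n := by
  simp only [Hgen, genCatalan_eq_raney]

lemma exists_root_one_add_mul_pow {p : ℕ} (hp : 0 < p) {x : ℝ} (hx₀ : 0 ≤ x)
    (hx : x ≤ (p : ℝ) ^ p / ((p : ℝ) + 1) ^ (p + 1)) :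
    ∃ y : ℝ, 0 ≤ y ∧ 1 + x * y ^ (p + 1) = y := by
  have hp' : (0 : ℝ) < p := Nat.cast_pos.mpr hp
  set f : ℝ → ℝ := fun t => 1 + x * t ^ (p + 1) - t
  have hc : (1 : ℝ) ≤ 1 + 1 / p := by simp [hp'.le]
  have hf₁ : 0 ≤ f 1 := by simpa [f] using hx₀
  have hfc : f (1 + 1 / p) ≤ 0 := by
    have hbound : x * (1 + 1 / p) ^ (p + 1) ≤ 1 / p :=
      calc x * (1 + 1 / p) ^ (p + 1)
          ≤ (p : ℝ) ^ p / ((p : ℝ) + 1) ^ (p + 1) * (1 + 1 / p) ^ (p + 1) := by gcongr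
        _ = 1 / p := by
          rw [one_add_div hp'.ne', div_pow, pow_succ (p : ℝ) p]
          field_simp
    simp only [f]
    linarith
  obtain ⟨y, hy, hfy⟩ := intermediate_value_Icc' hc (by fun_prop) ⟨hfc, hf₁⟩
  exact ⟨y, by linarith [hy.1], by simp only [f] at hfy; linarith⟩

theorem Hgen_satisfies_implicit_eq (p : ℕ) (hp : 0 < p) (x : ℝ)
    (hx : x ∈ Set.Icc 0 ((p : ℝ) ^ p / ((p : ℝ) + 1) ^ (p + 1))) :
    x * (Hgen p x) ^ (p + 1) = Hgen p x - 1 ∧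
    (∀ s : ℝ, 0 < s → x * s ^ (p + 1) = s - 1 → Hgen p x ≤ s) := by
  obtain ⟨hx₀, hx⟩ := hx
  have hb : 0 < p + 1 := p.succ_pos
  obtain ⟨y, hy₀, hy⟩ := exists_root_one_add_mul_pow hp hx₀ hx
  have hs := summable_of_sum_range_le (raney_mul_pow_nonneg hx₀ 1)
    (sum_range_raney_le_of_root hb hx₀ hy₀ hy)
  rw [Hgen_eq_tsum_raney]
  refine ⟨by linarith [tsum_raney_mul_pow_eq hb hx₀ hs], fun s hs₀ hroot => ?_⟩
  exact Real.tsum_le_of_sum_range_le (raney_mul_pow_nonneg hx₀ 1)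
    (sum_range_raney_le_of_root hb hx₀ hs₀.le (by linarith))
end

section
/- Fix a positive integer p and nonnegative integer d. Let S(n,d) be the number of monotonic lattice paths from (0,0) to (n, pn+d) weakly below the line y = px + d (with S(0,d)=1). Then S(n, d+1) = ∑_{i=0}^{n} S(i,d) S(n-i, 0). -/
/-- A monotonic lattice path with `L` steps is encoded as `f : Fin L → Bool`,
where `true` is an up-step `(0,1)` and `false` is a right-step `(1,0)`.
`upsIn f k` is the number of up-steps among the first `k` steps. -/
def upsIn {L : ℕ} (f : Fin L → Bool) (k : ℕ) : ℕ :=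
  (Finset.univ.filter (fun i : Fin L => (i : ℕ) < k ∧ f i = true)).card

/-- The number of right-steps among the first `k` steps. -/
def rightsIn {L : ℕ} (f : Fin L → Bool) (k : ℕ) : ℕ :=
  (Finset.univ.filter (fun i : Fin L => (i : ℕ) < k ∧ f i = false)).card

/-- `weakCount p d n` is the number of monotonic lattice paths from `(0,0)` to
`(n, p*n + d)` all of whose lattice points lie weakly below the line `y = p*x + d`. -/
noncomputable def weakCount (p d n : ℕ) : ℕ :=
  Nat.card {f : Fin ((p + 1) * n + d) → Bool //
    upsIn f ((p + 1) * n + d) = p * n + d ∧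
    ∀ k ≤ (p + 1) * n + d, upsIn f k ≤ p * rightsIn f k + d}

/-- `strictCount p d n` is the number of monotonic lattice paths from `(0,0)` to
`(n, p*n + d)` all of whose lattice points, except the endpoints, lie strictly below
the line `y = p*x + d` (with the convention `strictCount p 0 0 = 0`). -/
noncomputable def strictCount (p d n : ℕ) : ℕ :=
  if n = 0 ∧ d = 0 then 0 else
  Nat.card {f : Fin ((p + 1) * n + d) → Bool //
    upsIn f ((p + 1) * n + d) = p * n + d ∧
    ∀ k, 0 < k → k < (p + 1) * n + d → upsIn f k < p * rightsIn f k + d}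

/-!
Record a path as its word of steps, `true` for an up-step, and follow the slack `p x - y` of
the current point: a right-step raises it by `p`, an up-step lowers it by exactly `1`. A path
counted by `S(n, d + 1)` starts at slack `0` and ends at slack `-(d + 1)`, so there is a first
prefix with slack below `-d`; it is reached by an up-step from a point of slack exactly `-d`.
Cutting the path at that up-step writes it uniquely as `g ++ true :: h`, where `g` is counted
by `S(i, d)` and `h`, read from the touching point, by `S(n - i, 0)`.
-/

open Finset

theorem List.prefix_append_iff {α : Type*} {l l₁ l₂ : List α} :
    l <+: l₁ ++ l₂ ↔ l <+: l₁ ∨ ∃ t, t <+: l₂ ∧ l = l₁ ++ t := by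
  constructor
  · rintro ⟨r, hr⟩
    rcases List.append_eq_append_iff.1 hr with ⟨a, rfl, -⟩ | ⟨c, rfl, rfl⟩
    · exact .inl (List.prefix_append l a)
    · exact .inr ⟨c, List.prefix_append c r, rfl⟩
  · rintro (h | ⟨t, ht, rfl⟩)
    · exact List.prefix_append_of_prefix h
    · exact (List.prefix_append_right_inj l₁).2 ht

theorem List.count_eq_sum_map_ite {α : Type*} [DecidableEq α] (a : α) (l : List α) :
    l.count a = (l.map fun x => if x = a then 1 else 0).sum := by
  induction l with
  | nil => rfl
  | cons x l ih => simp [List.count_cons, ih, add_comm]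

theorem List.count_take_ofFn {α : Type*} [DecidableEq α] {L : ℕ} (f : Fin L → α) (k : ℕ)
    (a : α) : ((List.ofFn f).take k).count a = #{i : Fin L | (i : ℕ) < k ∧ f i = a} := by
  rw [List.count_eq_sum_map_ite, List.map_take, List.map_ofFn, List.sum_take_ofFn]
  simp [Finset.sum_boole, Finset.filter_filter]

theorem List.ofFn_image_setOf {α : Type*} (L : ℕ) (P : List α → Prop) :
    List.ofFn '' {f : Fin L → α | P (List.ofFn f)} = {l | l.length = L ∧ P l} := by
  ext l
  constructor
  · rintro ⟨f, hf, rfl⟩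
    exact ⟨List.length_ofFn, hf⟩
  · rintro ⟨rfl, hl⟩
    exact ⟨l.get, by simpa using hl, List.ofFn_get l⟩

namespace LatticePath

/-- `p * x - y` at the endpoint `(x, y)` of the path `l`: the path stays weakly below
`y = p * x + d` iff every prefix has slack at least `-d`. -/
def slack (p : ℕ) (l : List Bool) : ℤ := p * l.count false - l.count true

def StaysAbove (p : ℕ) (c : ℤ) (l : List Bool) : Prop :=
  ∀ l', l' <+: l → c ≤ slack p l'

def weakPaths (p d n : ℕ) : Set (List Bool) :=
  {l | l.count false = n ∧ slack p l = -d ∧ StaysAbove p (-d) l}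

variable {p : ℕ} {c : ℤ} {l l₁ l₂ : List Bool}

@[simp] theorem slack_nil : slack p [] = 0 := by simp [slack]

@[simp] theorem slack_append :
    slack p (l₁ ++ l₂) = slack p l₁ + slack p l₂ := by
  simp only [slack, List.count_append]
  push_cast
  ring

@[simp] theorem slack_singleton_true : slack p [true] = -1 := by simp [slack]

@[simp] theorem slack_singleton_false : slack p [false] = p := by simp [slack]

theorem StaysAbove.le_slack (h : StaysAbove p c l) : c ≤ slack p l :=
  h l (List.prefix_refl l)

theorem StaysAbove.mono {c' : ℤ} (hc : c' ≤ c) (h : StaysAbove p c l) : StaysAbove p c' l :=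
  fun l' hl' => hc.trans (h l' hl')

theorem staysAbove_nil : StaysAbove p c [] ↔ c ≤ 0 := by
  simp [StaysAbove]

theorem staysAbove_iff_forall_take :
    StaysAbove p c l ↔ ∀ k ≤ l.length, c ≤ slack p (l.take k) := by
  refine ⟨fun h k _ => h _ (List.take_prefix k l), fun h l' hl' => ?_⟩
  rw [List.prefix_iff_eq_take.1 hl']
  exact h _ hl'.length_le

theorem staysAbove_append :
    StaysAbove p c (l₁ ++ l₂) ↔ StaysAbove p c l₁ ∧ StaysAbove p (c - slack p l₁) l₂ := by
  simp only [StaysAbove, List.prefix_append_iff]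
  constructor
  · intro h
    refine ⟨fun l' hl' => h l' (.inl hl'), fun t ht => ?_⟩
    have := h _ (.inr ⟨t, ht, rfl⟩)
    rw [slack_append] at this
    linarith
  · rintro ⟨h₁, h₂⟩ l' (hl' | ⟨t, ht, rfl⟩)
    · exact h₁ l' hl'
    · have := h₂ t ht
      rw [slack_append]
      linarith

theorem staysAbove_concat {a : Bool} :
    StaysAbove p c (l ++ [a]) ↔ StaysAbove p c l ∧ c ≤ slack p (l ++ [a]) := by
  simp only [StaysAbove, List.prefix_concat_iff]
  constructor
  · intro h
    exact ⟨fun l' hl' => h l' (.inr hl'), h _ (.inl rfl)⟩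
  · rintro ⟨h, hc⟩ l' (rfl | hl')
    exacts [hc, h l' hl']

/-- First passage below `c`: since an up-step lowers the slack by exactly one, the step that
first leaves `[c, ∞)` is an up-step taken at slack `c`. -/
theorem exists_eq_append_true_cons_of_not_staysAbove (hc : c ≤ 0) (hl : ¬ StaysAbove p c l) :
    ∃ g h, l = g ++ true :: h ∧ StaysAbove p c g ∧ slack p g = c := by
  induction l using List.reverseRecOn with
  | nil => exact absurd (staysAbove_nil.2 hc) hl
  | append_singleton l a ih =>
    by_cases hla : StaysAbove p c l
    · rw [staysAbove_concat, not_and, not_le] at hl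
      have hlt := hl hla
      have hle := hla.le_slack
      cases a with
      | false =>
        rw [slack_append, slack_singleton_false] at hlt
        omega
      | true =>
        rw [slack_append, slack_singleton_true] at hlt
        exact ⟨l, [], rfl, hla, by omega⟩
    · obtain ⟨g, h, rfl, hg, hgc⟩ := ih hla
      exact ⟨g, h ++ [a], by simp, hg, hgc⟩

theorem length_le_of_append_true_cons_eq {g g' h h' : List Bool} (hgc : slack p g = c)
    (hg' : StaysAbove p c g') (heq : g ++ true :: h = g' ++ true :: h') :
    g'.length ≤ g.length := by
  by_contra! hlt
  have hpre : g ++ [true] <+: g' :=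
    List.prefix_of_prefix_length_le (l₃ := g' ++ true :: h') (heq ▸ ⟨h, by simp⟩)
      (List.prefix_append _ _) (by simpa using hlt)
  have := hg' _ hpre
  rw [slack_append, slack_singleton_true] at this
  omega

theorem eq_of_append_true_cons_eq {g g' h h' : List Bool} (hg : StaysAbove p c g)
    (hgc : slack p g = c) (hg' : StaysAbove p c g') (hgc' : slack p g' = c)
    (heq : g ++ true :: h = g' ++ true :: h') : g = g' ∧ h = h' := by
  obtain ⟨rfl, hh⟩ := List.append_inj heq <| le_antisymm
    (length_le_of_append_true_cons_eq hgc' hg heq.symm)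
    (length_le_of_append_true_cons_eq hgc hg' heq)
  exact ⟨rfl, List.cons_injective hh⟩

theorem append_true_cons_mem_weakPaths {d i j : ℕ} {g h : List Bool}
    (hg : g ∈ weakPaths p d i) (hh : h ∈ weakPaths p 0 j) :
    g ++ true :: h ∈ weakPaths p (d + 1) (i + j) := by
  obtain ⟨hgi, hgs, hga⟩ := hg
  obtain ⟨hhj, hhs, hha⟩ := hh
  have hs : slack p (g ++ [true]) = -(d + 1 : ℕ) := by
    rw [slack_append, hgs, slack_singleton_true]
    push_cast
    ring
  rw [List.append_cons g true h]
  refine ⟨by simp [hgi, hhj], by rw [slack_append, hs, hhs]; simp, staysAbove_append.2 ⟨?_, ?_⟩⟩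
  · exact staysAbove_concat.2 ⟨hga.mono (by omega), hs.ge⟩
  · simpa [hs] using hha

theorem exists_mem_weakPaths_of_mem_weakPaths_succ {d n : ℕ} {l : List Bool}
    (hl : l ∈ weakPaths p (d + 1) n) :
    ∃ i ≤ n, ∃ g ∈ weakPaths p d i, ∃ h ∈ weakPaths p 0 (n - i), l = g ++ true :: h := by
  obtain ⟨hln, hls, hla⟩ := hl
  have hbelow : ¬ StaysAbove p (-d) l := fun h => by
    have := h.le_slack
    omega
  obtain ⟨g, h, rfl, hga, hgs⟩ := exists_eq_append_true_cons_of_not_staysAbove (by omega) hbelow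
  have hcount : (g ++ true :: h).count false = g.count false + h.count false := by simp
  rw [hcount] at hln
  rw [List.append_cons g true h, staysAbove_append] at hla
  rw [List.append_cons g true h, slack_append, slack_append, hgs, slack_singleton_true] at hls
  rw [slack_append, hgs, slack_singleton_true] at hla
  refine ⟨g.count false, by omega, g, ⟨rfl, hgs, hga⟩, h, ⟨by omega, by omega, ?_⟩, rfl⟩
  convert hla.2 using 1
  push_cast
  ring

theorem weakPaths_eq_setOf (p d n : ℕ) :
    weakPaths p d n = {l | l.length = (p + 1) * n + d ∧ l.count true = p * n + d ∧
      ∀ k ≤ (p + 1) * n + d, (l.take k).count true ≤ p * (l.take k).count false + d} := by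
  ext l
  have hlen := List.count_true_add_count_false l
  have hslack (l' : List Bool) :
      -(d : ℤ) ≤ slack p l' ↔ l'.count true ≤ p * l'.count false + d := by
    simp only [slack]
    omega
  simp only [weakPaths, Set.mem_ofPred_eq, staysAbove_iff_forall_take, hslack]
  constructor
  · rintro ⟨hn, hs, ha⟩
    have hct : l.count true = p * n + d := by
      simp only [slack, hn] at hs
      omega
    have hL : l.length = (p + 1) * n + d := by
      rw [← hlen, hct, hn]
      ring
    exact ⟨hL, hct, hL ▸ ha⟩
  · rintro ⟨hL, hct, ha⟩
    have hn : l.count false = n := by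
      rw [← hlen, hct] at hL
      linarith
    refine ⟨hn, by simp only [slack, hn, hct]; push_cast; ring, hL ▸ ha⟩

instance (p d n : ℕ) : Finite (weakPaths p d n) := by
  rw [weakPaths_eq_setOf]
  exact ((List.finite_length_eq Bool _).subset fun _ hl => hl.1).to_subtype

def joinAtFirstTouch (p d n : ℕ) :
    (Σ i : Fin (n + 1), weakPaths p d i × weakPaths p 0 (n - i)) → weakPaths p (d + 1) n :=
  fun x => ⟨x.2.1 ++ true :: x.2.2, by
    simpa [Nat.add_sub_cancel' (Nat.lt_succ_iff.1 x.1.2)] using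
      append_true_cons_mem_weakPaths x.2.1.2 x.2.2.2⟩

theorem joinAtFirstTouch_injective (p d n : ℕ) : Function.Injective (joinAtFirstTouch p d n) := by
  rintro ⟨i, ⟨g, hg⟩, ⟨h, hh⟩⟩ ⟨i', ⟨g', hg'⟩, ⟨h', hh'⟩⟩ heq
  obtain ⟨rfl, rfl⟩ := eq_of_append_true_cons_eq hg.2.2 hg.2.1 hg'.2.2 hg'.2.1
    (congrArg Subtype.val heq)
  obtain rfl : i = i' := Fin.ext (hg.1.symm.trans hg'.1)
  rfl

theorem joinAtFirstTouch_surjective (p d n : ℕ) :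
    Function.Surjective (joinAtFirstTouch p d n) := by
  rintro ⟨l, hl⟩
  obtain ⟨i, hi, g, hg, h, hh, rfl⟩ := exists_mem_weakPaths_of_mem_weakPaths_succ hl
  exact ⟨⟨⟨i, Nat.lt_succ_iff.2 hi⟩, ⟨g, hg⟩, ⟨h, hh⟩⟩, rfl⟩

theorem card_weakPaths_succ (p d n : ℕ) :
    Nat.card (weakPaths p (d + 1) n) =
      ∑ i ∈ range (n + 1), Nat.card (weakPaths p d i) * Nat.card (weakPaths p 0 (n - i)) := by
  rw [← Nat.card_congr (Equiv.ofBijective _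
      ⟨joinAtFirstTouch_injective p d n, joinAtFirstTouch_surjective p d n⟩),
    Nat.card_sigma, ← Fin.sum_univ_eq_sum_range
      (fun i => Nat.card (weakPaths p d i) * Nat.card (weakPaths p 0 (n - i)))]
  simp only [Nat.card_prod]

end LatticePath

theorem upsIn_eq_count_take {L : ℕ} (f : Fin L → Bool) (k : ℕ) :
    upsIn f k = ((List.ofFn f).take k).count true :=
  (List.count_take_ofFn f k true).symm

theorem rightsIn_eq_count_take {L : ℕ} (f : Fin L → Bool) (k : ℕ) :
    rightsIn f k = ((List.ofFn f).take k).count false :=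
  (List.count_take_ofFn f k false).symm

open LatticePath in
theorem weakCount_eq_card_weakPaths (p d n : ℕ) :
    weakCount p d n = Nat.card (weakPaths p d n) := by
  rw [weakPaths_eq_setOf, ← List.ofFn_image_setOf, Nat.card_image_of_injective List.ofFn_injective]
  exact Nat.card_congr <| Equiv.subtypeEquivRight fun f => by
    simp [upsIn_eq_count_take, rightsIn_eq_count_take, List.take_of_length_le]

theorem weakCount_succ_eq_sum_general (p : ℕ) (d n : ℕ) :
    weakCount p (d + 1) n = ∑ i ∈ Finset.range (n + 1), weakCount p d i * weakCount p 0 (n - i) := by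
  simp only [weakCount_eq_card_weakPaths]
  exact LatticePath.card_weakPaths_succ p d n

theorem weakCount_succ_eq_sum (p : ℕ) (hp : 0 < p) (d n : ℕ) :
    weakCount p (d + 1) n = ∑ i ∈ Finset.range (n + 1), weakCount p d i * weakCount p 0 (n - i) :=
  weakCount_succ_eq_sum_general p d n
end

section
/- Let β ≥ p where p is a positive integer, and d ≥ 0 an integer. Then the β-biased monotonic random walk starting at the origin crosses the line y = px + d with probability 1. -/
/-- `crossProb β p d` is the probability `Φ_β(p,d)` that the `β`-biased monotonic random
walk starting at the origin (moving right with probability `1/(β+1)` and up with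
probability `β/(β+1)`) crosses the line `y = p*x + d`, i.e. meets a lattice point
`(n, p*n + d + 1)`.  Decomposing by the first lattice point above the line, this
probability equals `∑ₙ S(n,d) β^{pn+d+1}/(β+1)^{pn+n+d+1}`, where `S(n,d) = weakCount p d n`. -/
noncomputable def crossProb (β : ℝ) (p d : ℕ) : ℝ :=
  ∑' n : ℕ, (weakCount p d n : ℝ) * β ^ (p * n + d + 1) / (β + 1) ^ ((p + 1) * n + d + 1)

/-- `meetProb β p d` is the probability `Ψ_β(p,d)` that the `β`-biased monotonic random
walk starting at the origin meets a lattice point on the line `y = p*x + d` after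
departure.  For `d > 0`, decomposing by the first such lattice point `(n, p*n+d)` (reached
by a path strictly below the line except at its endpoint), this probability equals
`∑ₙ T(n,d) β^{pn+d}/(β+1)^{pn+n+d}`; for `d = 0`, by the reflection symmetry of first
meeting points it equals `2 ∑ₙ N(p,n) β^{pn}/(β+1)^{pn+n}`. -/
noncomputable def meetProb (β : ℝ) (p d : ℕ) : ℝ :=
  if d = 0 then 2 * ∑' n : ℕ, (strictCount p 0 n : ℝ) * β ^ (p * n) / (β + 1) ^ ((p + 1) * n)
  else ∑' n : ℕ, (strictCount p d n : ℝ) * β ^ (p * n + d) / (β + 1) ^ ((p + 1) * n + d)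

/-!
Put `u 0 = 1` and `u (d + 1) = Φ_β(p, d)`. Splitting a path at its first step gives
`(β + 1) u (k + 1) = β u k + u (k + 1 + p)`. This holds already for the partial sums of the
series defining `Φ`, and an induction on the number of summands shows that every partial
sequence is antitone with first term `1`; hence the series converge and `u` is an antitone
solution of the recurrence with values in `[0, 1]`. If `l` is its limit, summing the recurrence
telescopes to `β (u 0 - l) = ∑_{j < p} (u (j + 1) - l) ≤ p (u 1 - l)`, which for `β ≥ p` forces
`u 1 = u 0`. The same holds for every shift of `u`, so `u` is constant, equal to `u 0 = 1`.
-/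

lemma Nat.card_subtype_fin_succ {α : Type*} [Fintype α] {L : ℕ} (Q : (Fin (L + 1) → α) → Prop) :
    Nat.card {f // Q f} = ∑ a, Nat.card {g : Fin L → α // Q (Fin.cons a g)} := by
  rw [← Nat.card_sigma]
  exact Nat.card_congr (((Fin.consEquiv fun _ => α).subtypeEquiv fun _ => Iff.rfl).symm.trans
    (Equiv.subtypeProdEquivSigmaSubtype fun a g => Q (Fin.cons a g)))

namespace LatticePath

variable {L : ℕ}

@[simp]
lemma upsIn_zero (f : Fin L → Bool) : upsIn f 0 = 0 := by
  simp [upsIn]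

@[simp]
lemma rightsIn_zero (f : Fin L → Bool) : rightsIn f 0 = 0 := by
  simp [rightsIn]

lemma upsIn_le (f : Fin L → Bool) (k : ℕ) : upsIn f k ≤ L :=
  (Finset.card_filter_le _ _).trans_eq (Finset.card_fin L)

@[simp]
lemma upsIn_cons (b : Bool) (g : Fin L → Bool) (k : ℕ) :
    upsIn (Fin.cons b g : Fin (L + 1) → Bool) (k + 1) = upsIn g k + b.toNat := by
  simp only [upsIn, Finset.card_filter, Fin.sum_univ_succ]
  cases b <;> simp [add_comm]

@[simp]
lemma rightsIn_cons (b : Bool) (g : Fin L → Bool) (k : ℕ) :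
    rightsIn (Fin.cons b g : Fin (L + 1) → Bool) (k + 1) = rightsIn g k + (!b).toNat := by
  simp only [rightsIn, Finset.card_filter, Fin.sum_univ_succ]
  cases b <;> simp [add_comm]

def WeaklyBelow (p d : ℕ) (f : Fin L → Bool) : Prop :=
  ∀ k ≤ L, upsIn f k ≤ p * rightsIn f k + d

lemma weaklyBelow_cons_iff {p d : ℕ} (b : Bool) (g : Fin L → Bool) :
    WeaklyBelow p d (Fin.cons b g : Fin (L + 1) → Bool) ↔
      ∀ k ≤ L, upsIn g k + b.toNat ≤ p * (rightsIn g k + (!b).toNat) + d := by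
  constructor
  · intro h k hk
    simpa using h (k + 1) (by omega)
  · rintro h (_ | k) hk
    · simp
    · simpa using h k (by omega)

lemma weaklyBelow_succ_cons_true {p d : ℕ} (g : Fin L → Bool) :
    WeaklyBelow p (d + 1) (Fin.cons true g : Fin (L + 1) → Bool) ↔ WeaklyBelow p d g := by
  rw [weaklyBelow_cons_iff]
  refine forall₂_congr fun k _ => ?_
  simp only [Bool.toNat_true, Bool.not_true, Bool.toNat_false, add_zero]
  omega

lemma not_weaklyBelow_zero_cons_true {p : ℕ} (g : Fin L → Bool) :
    ¬ WeaklyBelow p 0 (Fin.cons true g : Fin (L + 1) → Bool) := by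
  rw [weaklyBelow_cons_iff]
  intro h
  simpa using h 0 (Nat.zero_le L)

lemma weaklyBelow_cons_false {p d : ℕ} (g : Fin L → Bool) :
    WeaklyBelow p d (Fin.cons false g : Fin (L + 1) → Bool) ↔ WeaklyBelow p (d + p) g := by
  rw [weaklyBelow_cons_iff]
  refine forall₂_congr fun k _ => ?_
  simp only [Bool.toNat_false, Bool.not_false, Bool.toNat_true, mul_add]
  omega

noncomputable def pathCount (p d L U : ℕ) : ℕ :=
  Nat.card {f : Fin L → Bool // upsIn f L = U ∧ WeaklyBelow p d f}

lemma weakCount_eq_pathCount (p d n : ℕ) :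
    weakCount p d n = pathCount p d ((p + 1) * n + d) (p * n + d) := rfl

lemma pathCount_zero_zero (p d : ℕ) : pathCount p d 0 0 = 1 := by
  rw [pathCount, Nat.card_eq_one_iff_unique]
  refine ⟨inferInstance, ⟨⟨finZeroElim, upsIn_zero _, fun k hk => ?_⟩⟩⟩
  simp [Nat.le_zero.mp hk]

lemma pathCount_eq_zero_of_lt {p d L U : ℕ} (h : L < U) : pathCount p d L U = 0 := by
  rw [pathCount, Nat.card_eq_zero]
  exact Or.inl ⟨fun f => (upsIn_le f.1 L).not_gt (f.2.1.symm ▸ h)⟩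

lemma pathCount_succ_succ (p d L U : ℕ) :
    pathCount p (d + 1) (L + 1) (U + 1) =
      pathCount p d L U + pathCount p (d + 1 + p) L (U + 1) := by
  rw [pathCount, Nat.card_subtype_fin_succ, Fintype.sum_bool]
  congr 1 <;> refine Nat.card_congr (Equiv.subtypeEquivRight fun g => ?_)
  · simp [weaklyBelow_succ_cons_true]
  · simp [weaklyBelow_cons_false]

lemma pathCount_zero_succ (p L U : ℕ) : pathCount p 0 (L + 1) U = pathCount p p L U := by
  rw [pathCount, Nat.card_subtype_fin_succ, Fintype.sum_bool]
  have : IsEmpty {g : Fin L → Bool // upsIn (Fin.cons true g : Fin (L + 1) → Bool) (L + 1) = U ∧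
      WeaklyBelow p 0 (Fin.cons true g : Fin (L + 1) → Bool)} :=
    ⟨fun g => not_weaklyBelow_zero_cons_true g.1 g.2.2⟩
  rw [Nat.card_of_isEmpty, zero_add]
  exact Nat.card_congr (Equiv.subtypeEquivRight fun g => by simp [weaklyBelow_cons_false])

lemma pathCount_self (p d : ℕ) : pathCount p d d d = 1 := by
  induction d with
  | zero => exact pathCount_zero_zero p 0
  | succ d ih => rw [pathCount_succ_succ, ih, pathCount_eq_zero_of_lt (Nat.lt_succ_self d)]

end LatticePath

open LatticePath

lemma weakCount_zero_right (p d : ℕ) : weakCount p d 0 = 1 := by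
  simpa [weakCount_eq_pathCount] using pathCount_self p d

lemma weakCount_succ_succ (p d n : ℕ) :
    weakCount p (d + 1) (n + 1) = weakCount p d (n + 1) + weakCount p (d + 1 + p) n := by
  simp only [weakCount_eq_pathCount]
  rw [show (p + 1) * (n + 1) + (d + 1) = (p + 1) * (n + 1) + d + 1 by ring,
    show p * (n + 1) + (d + 1) = p * (n + 1) + d + 1 by ring, pathCount_succ_succ]
  congr 2 <;> ring

lemma weakCount_zero_succ (p n : ℕ) : weakCount p 0 (n + 1) = weakCount p p n := by
  simp only [weakCount_eq_pathCount]
  rw [show (p + 1) * (n + 1) + 0 = (p + 1) * n + p + 1 by ring, pathCount_zero_succ]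
  congr 1

section Recurrence

variable {β : ℝ} {p : ℕ}

lemma antitone_of_recurrence (hβ : 0 ≤ β) {v w : ℕ → ℝ} (hv : Antitone v) (h0 : v 0 ≤ w 0)
    (hw : ∀ k, (β + 1) * w (k + 1) = β * w k + v (k + 1 + p)) : Antitone w := by
  refine antitone_nat_of_succ_le fun k => ?_
  induction k with
  | zero =>
    have h : (β + 1) * w (0 + 1) ≤ (β + 1) * w 0 := by
      rw [hw]
      linarith [hv (Nat.zero_le (0 + 1 + p))]
    exact le_of_mul_le_mul_left h (by linarith)
  | succ k ih =>
    have h : (β + 1) * w (k + 1 + 1) ≤ (β + 1) * w (k + 1) := by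
      rw [hw, hw]
      linarith [mul_le_mul_of_nonneg_left ih hβ, hv (by omega : k + 1 + p ≤ k + 1 + 1 + p)]
    exact le_of_mul_le_mul_left h (by linarith)

lemma mul_sub_eq_sum_of_recurrence {u : ℕ → ℝ}
    (hu : ∀ k, (β + 1) * u (k + 1) = β * u k + u (k + 1 + p)) (K : ℕ) :
    β * (u 0 - u K) = ∑ j ∈ Finset.range p, (u (j + 1) - u (K + j + 1)) := by
  induction K with
  | zero => simp
  | succ K ih =>
    have telescope : ∑ j ∈ Finset.range p, (u (K + 1 + j) - u (K + 1 + (j + 1))) =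
        u (K + 1) - u (K + 1 + p) := Finset.sum_range_sub' (fun j => u (K + 1 + j)) p
    have split : ∑ j ∈ Finset.range p, (u (j + 1) - u (K + 1 + j + 1)) =
        ∑ j ∈ Finset.range p, (u (j + 1) - u (K + j + 1)) +
          ∑ j ∈ Finset.range p, (u (K + 1 + j) - u (K + 1 + (j + 1))) := by
      rw [← Finset.sum_add_distrib]
      exact Finset.sum_congr rfl fun j _ => by ring_nf
    rw [split, ← ih, telescope]
    linarith [hu K]

lemma apply_one_eq_apply_zero_of_recurrence (hp : 0 < p) (hβ : (p : ℝ) ≤ β) {u : ℕ → ℝ}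
    (hanti : Antitone u) (hbdd : BddBelow (Set.range u))
    (hu : ∀ k, (β + 1) * u (k + 1) = β * u k + u (k + 1 + p)) : u 1 = u 0 := by
  obtain ⟨l, hl⟩ : ∃ l, Filter.Tendsto u Filter.atTop (nhds l) :=
    ⟨_, tendsto_atTop_ciInf hanti hbdd⟩
  have hlim : β * (u 0 - l) = ∑ j ∈ Finset.range p, (u (j + 1) - l) := by
    refine tendsto_nhds_unique ((hl.const_sub _).const_mul β) ?_
    simp_rw [mul_sub_eq_sum_of_recurrence hu]
    exact tendsto_finsetSum _ fun j _ =>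
      (hl.comp (Filter.tendsto_add_atTop_nat (j + 1))).const_sub _
  have hsum : ∑ j ∈ Finset.range p, (u (j + 1) - l) ≤ p * (u 1 - l) := by
    refine (Finset.sum_le_card_nsmul _ _ (u 1 - l) fun j _ => ?_).trans_eq
      (by rw [Finset.card_range, nsmul_eq_mul])
    exact sub_le_sub_right (hanti (Nat.le_add_left 1 j)) l
  have key : (p : ℝ) * (u 0 - l) ≤ p * (u 1 - l) :=
    calc (p : ℝ) * (u 0 - l)
        ≤ β * (u 0 - l) := mul_le_mul_of_nonneg_right hβ (sub_nonneg.2 (hanti.le_of_tendsto hl 0))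
      _ = ∑ j ∈ Finset.range p, (u (j + 1) - l) := hlim
      _ ≤ p * (u 1 - l) := hsum
  have hp' : (0 : ℝ) < p := by exact_mod_cast hp
  exact le_antisymm (hanti zero_le_one) (by linarith [le_of_mul_le_mul_left key hp'])

lemma apply_eq_apply_zero_of_recurrence (hp : 0 < p) (hβ : (p : ℝ) ≤ β) {u : ℕ → ℝ}
    (hanti : Antitone u) (hbdd : BddBelow (Set.range u))
    (hu : ∀ k, (β + 1) * u (k + 1) = β * u k + u (k + 1 + p)) (k : ℕ) : u k = u 0 := by
  induction k with
  | zero => rfl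
  | succ k ih =>
    rw [← ih]
    have h := apply_one_eq_apply_zero_of_recurrence hp hβ (u := fun n => u (n + k))
      (hanti.comp_monotone fun a b hab => Nat.add_le_add_right hab k) ?_ fun n => ?_
    · simpa [add_comm] using h
    · exact hbdd.mono (Set.range_comp_subset_range _ u)
    · simpa [add_right_comm _ k] using hu (n + k)

end Recurrence

section CrossingSeries

variable {β : ℝ} {p : ℕ}

noncomputable def crossTerm (β : ℝ) (p d n : ℕ) : ℝ :=
  (weakCount p d n : ℝ) * β ^ (p * n + d + 1) / (β + 1) ^ ((p + 1) * n + d + 1)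

lemma crossTerm_nonneg (hβ : 0 ≤ β) (d n : ℕ) : 0 ≤ crossTerm β p d n := by
  unfold crossTerm
  positivity

lemma crossTerm_zero_zero : crossTerm β p 0 0 = β / (β + 1) := by
  simp [crossTerm, weakCount_zero_right]

lemma crossTerm_succ_zero (hβ : β + 1 ≠ 0) (d : ℕ) :
    (β + 1) * crossTerm β p (d + 1) 0 = β * crossTerm β p d 0 := by
  simp only [crossTerm, weakCount_zero_right]
  field_simp
  ring

lemma crossTerm_zero_succ (hβ : β + 1 ≠ 0) (n : ℕ) :
    (β + 1) * crossTerm β p 0 (n + 1) = crossTerm β p p n := by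
  simp only [crossTerm, weakCount_zero_succ]
  field_simp
  ring

lemma crossTerm_succ_succ (hβ : β + 1 ≠ 0) (d n : ℕ) :
    (β + 1) * crossTerm β p (d + 1) (n + 1) =
      β * crossTerm β p d (n + 1) + crossTerm β p (d + 1 + p) n := by
  simp only [crossTerm, weakCount_succ_succ]
  push_cast
  field_simp
  ring

noncomputable def crossPartial (β : ℝ) (p N : ℕ) : ℕ → ℝ
  | 0 => 1
  | d + 1 => ∑ n ∈ Finset.range N, crossTerm β p d n

lemma crossPartial_recurrence (hβ : β + 1 ≠ 0) (N k : ℕ) :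
    (β + 1) * crossPartial β p (N + 1) (k + 1) =
      β * crossPartial β p (N + 1) k + crossPartial β p N (k + 1 + p) := by
  cases k with
  | zero =>
    rw [zero_add, add_comm 1 p]
    simp only [crossPartial, Finset.sum_range_succ', mul_add, Finset.mul_sum,
      crossTerm_zero_succ hβ, crossTerm_zero_zero]
    field_simp
    ring
  | succ d =>
    rw [show d + 1 + 1 + p = d + 1 + p + 1 by omega]
    simp only [crossPartial, Finset.sum_range_succ', mul_add, Finset.mul_sum,
      crossTerm_succ_succ hβ, crossTerm_succ_zero hβ, Finset.sum_add_distrib]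
    ring

lemma antitone_crossPartial (hβ : 0 ≤ β) (N : ℕ) : Antitone (crossPartial β p N) := by
  induction N with
  | zero => exact antitone_nat_of_succ_le fun k => by cases k <;> simp [crossPartial]
  | succ N ih =>
    exact antitone_of_recurrence hβ ih le_rfl (crossPartial_recurrence (by linarith) N)

lemma summable_crossTerm (hβ : 0 ≤ β) (d : ℕ) : Summable (crossTerm β p d) :=
  summable_of_sum_range_le (crossTerm_nonneg hβ d) fun N =>
    antitone_crossPartial hβ N (Nat.zero_le (d + 1))

-- `crossProbFrom β p k` is the probability that the walk reaches a lattice point `k` units above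
-- the line `y = p * x`: for `k = d + 1` this is `Φ_β(p, d)`, and for `k = 0` the origin is one.
noncomputable def crossProbFrom (β : ℝ) (p : ℕ) : ℕ → ℝ
  | 0 => 1
  | d + 1 => crossProb β p d

lemma tendsto_crossPartial (hβ : 0 ≤ β) (k : ℕ) :
    Filter.Tendsto (fun N => crossPartial β p N k) Filter.atTop (nhds (crossProbFrom β p k)) := by
  cases k with
  | zero => exact tendsto_const_nhds
  | succ d => exact (summable_crossTerm hβ d).hasSum.tendsto_sum_nat

lemma antitone_crossProbFrom (hβ : 0 ≤ β) : Antitone (crossProbFrom β p) := fun _ _ hab =>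
  le_of_tendsto_of_tendsto' (tendsto_crossPartial hβ _) (tendsto_crossPartial hβ _) fun N =>
    antitone_crossPartial hβ N hab

lemma crossProbFrom_nonneg (hβ : 0 ≤ β) (k : ℕ) : 0 ≤ crossProbFrom β p k := by
  cases k with
  | zero => exact zero_le_one
  | succ d => exact tsum_nonneg (crossTerm_nonneg hβ d)

lemma crossProbFrom_recurrence (hβ : 0 ≤ β) (k : ℕ) :
    (β + 1) * crossProbFrom β p (k + 1) =
      β * crossProbFrom β p k + crossProbFrom β p (k + 1 + p) := by
  have shift := Filter.tendsto_add_atTop_nat 1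
  refine tendsto_nhds_unique (((tendsto_crossPartial hβ _).comp shift).const_mul _) ?_
  simp only [Function.comp_def, crossPartial_recurrence (by linarith : β + 1 ≠ 0)]
  exact (((tendsto_crossPartial hβ _).comp shift).const_mul _).add (tendsto_crossPartial hβ _)

end CrossingSeries

theorem crossProb_eq_one (β : ℝ) (p : ℕ) (hp : 0 < p) (hβ : (p : ℝ) ≤ β) (d : ℕ) :
    crossProb β p d = 1 := by
  have hβ₀ : 0 ≤ β := (Nat.cast_nonneg p).trans hβ
  exact apply_eq_apply_zero_of_recurrence hp hβ (antitone_crossProbFrom hβ₀)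
    ⟨0, Set.forall_mem_range.2 (crossProbFrom_nonneg hβ₀)⟩ (crossProbFrom_recurrence hβ₀) (d + 1)
end

section
/- Let β > 0, p a positive integer, and d a positive integer. The probability Ψ_β(p,d) that the β-biased monotonic random walk starting at the origin meets a lattice point on the line y = px + d equals Φ_β(p,0)^d, where Φ_β(p,0) is the probability of crossing y = px. -/
/-!
Encode a monotone path as a word of up-steps (`true`) and right-steps (`false`) and follow its
height `#up - p * #right` above the line `y = p x`. Since the height rises by at most one per
step, the walk first meets a lattice point of `y = p x + d` exactly when its height first reaches
`d`. A first passage to level `a + b` splits uniquely, at its first passage to level `a`, into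
first passages to levels `a` and `b`; hence the series `∑ x ^ #up * y ^ #right` over first
passages to level `d` is the `d`-th power of the one for level `1`. A first passage to level `1`
is a path staying weakly below `y = p x` followed by an up-step, which identifies the level-`1`
series with `Φ_β(p,0)`. The series are taken in `[0, ∞]`, where all rearrangements are free of
summability conditions, and `toReal` commutes with them.
-/

open Finset

namespace LatticePath

variable (p : ℕ)

def height (l : List Bool) : ℤ := l.count true - p * l.count false

@[simp] lemma height_nil : height p [] = 0 := by simp [height]

@[simp] lemma height_append (l₁ l₂ : List Bool) :
    height p (l₁ ++ l₂) = height p l₁ + height p l₂ := by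
  simp only [height, List.count_append]; push_cast; ring

@[simp] lemma height_singleton_true : height p [true] = 1 := by simp [height]

@[simp] lemma height_singleton_false : height p [false] = -p := by simp [height]

lemma height_take_succ_le (l : List Bool) (k : ℕ) :
    height p (l.take (k + 1)) ≤ height p (l.take k) + 1 := by
  rw [List.take_add_one, height_append]
  rcases l[k]? with _ | _ | _ <;> simp

variable {p}

lemma height_eq_iff {l : List Bool} {d : ℕ} :
    height p l = d ↔ l.count true = p * l.count false + d := by
  simp only [height]; omega

lemma height_lt_iff {l : List Bool} {d : ℕ} :
    height p l < d ↔ l.count true < p * l.count false + d := by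
  simp only [height]; omega

lemma height_le_iff {l : List Bool} {d : ℕ} :
    height p l ≤ d ↔ l.count true ≤ p * l.count false + d := by
  simp only [height]; omega

variable (p) in
def IsFirstPassage (d : ℕ) (l : List Bool) : Prop :=
  height p l = d ∧ ∀ k < l.length, height p (l.take k) < d

variable {a b d : ℕ} {l u u' v v' : List Bool}

lemma IsFirstPassage.append (hu : IsFirstPassage p a u) (hv : IsFirstPassage p b v) :
    IsFirstPassage p (a + b) (u ++ v) := by
  refine ⟨by simp [hu.1, hv.1], fun k hk => ?_⟩
  rw [List.take_append, height_append]
  rcases lt_or_ge k u.length with hku | hku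
  · have := hu.2 k hku
    simp only [Nat.sub_eq_zero_of_le hku.le, List.take_zero, height_nil, add_zero]
    omega
  · have := hv.2 (k - u.length) (by rw [List.length_append] at hk; omega)
    rw [List.take_of_length_le hku, hu.1]
    push_cast; linarith

lemma IsFirstPassage.eq_of_prefix (hu : IsFirstPassage p a u) (hu' : IsFirstPassage p a u')
    (h : u <+: u') : u = u' := by
  refine h.eq_of_length (h.length_le.antisymm (not_lt.1 fun hlt => ?_))
  have := hu'.2 _ hlt
  rw [← List.prefix_iff_eq_take.1 h, hu.1] at this
  exact lt_irrefl _ this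

lemma IsFirstPassage.append_inj (hu : IsFirstPassage p a u) (hu' : IsFirstPassage p a u')
    (h : u ++ v = u' ++ v') : u = u' ∧ v = v' := by
  have hpre : u <+: u' ++ v' := h ▸ List.prefix_append u v
  have hpre' : u' <+: u ++ v := h ▸ List.prefix_append u' v'
  obtain rfl : u = u' := by
    rcases le_total u.length u'.length with hl | hl
    · exact hu.eq_of_prefix hu' <|
        List.prefix_of_prefix_length_le hpre (List.prefix_append u' v') hl
    · exact (hu'.eq_of_prefix hu <|
        List.prefix_of_prefix_length_le hpre' (List.prefix_append u v) hl).symm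
  exact ⟨rfl, List.append_cancel_left h⟩

lemma exists_isFirstPassage_take (ha : 0 < a) (h : (a : ℤ) ≤ height p l) :
    ∃ k, IsFirstPassage p a (l.take k) := by
  have hex : ∃ k, (a : ℤ) ≤ height p (l.take k) := ⟨l.length, by simpa using h⟩
  have hmin : ∀ j < Nat.find hex, height p (l.take j) < a := fun j hj =>
    not_le.1 (Nat.find_min hex hj)
  refine ⟨Nat.find hex, le_antisymm ?_ (Nat.find_spec hex), fun j hj => ?_⟩
  · obtain ⟨k, hk⟩ : ∃ k, Nat.find hex = k + 1 := Nat.exists_eq_add_one.2 <| Nat.pos_of_ne_zero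
      fun h0 => by have := Nat.find_spec hex; rw [h0, List.take_zero, height_nil] at this; omega
    have := hmin k (by omega)
    have := height_take_succ_le p l k
    rw [hk]; omega
  · rw [List.length_take] at hj
    rw [List.take_take, min_eq_left (by omega)]
    exact hmin j (by omega)

lemma IsFirstPassage.exists_append_eq (ha : 0 < a) (h : IsFirstPassage p (a + b) l) :
    ∃ u v, IsFirstPassage p a u ∧ IsFirstPassage p b v ∧ u ++ v = l := by
  obtain ⟨k, hk⟩ := exists_isFirstPassage_take ha (l := l) (by rw [h.1]; push_cast; omega)
  refine ⟨_, l.drop k, hk, ⟨?_, fun j hj => ?_⟩, List.take_append_drop k l⟩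
  · have := h.1
    rw [← List.take_append_drop k l, height_append, hk.1] at this
    push_cast at this; linarith
  · have := h.2 (k + j) (by rw [List.length_drop] at hj; omega)
    rw [List.take_add, height_append, hk.1] at this
    push_cast at this; linarith

variable (p) in
noncomputable def IsFirstPassage.appendEquiv (ha : 0 < a) :
    {u // IsFirstPassage p a u} × {v // IsFirstPassage p b v} ≃
      {l // IsFirstPassage p (a + b) l} :=
  Equiv.ofBijective (fun uv => ⟨uv.1.1 ++ uv.2.1, uv.1.2.append uv.2.2⟩)
    ⟨fun uv uv' h => by
      obtain ⟨hu, hv⟩ := uv.1.2.append_inj uv'.1.2 (congrArg Subtype.val h)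
      exact Prod.ext (Subtype.ext hu) (Subtype.ext hv),
     fun l => by
      obtain ⟨u, v, hu, hv, huv⟩ := l.2.exists_append_eq ha
      exact ⟨(⟨u, hu⟩, ⟨v, hv⟩), Subtype.ext huv⟩⟩

lemma isFirstPassage_append_true_iff :
    IsFirstPassage p (d + 1) (l ++ [true]) ↔
      height p l = d ∧ ∀ k ≤ l.length, height p (l.take k) ≤ d := by
  simp only [IsFirstPassage, height_append, height_singleton_true, List.length_append,
    List.length_singleton, Nat.lt_succ_iff]
  refine and_congr (by push_cast; omega) (forall₂_congr fun k hk => ?_)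
  rw [List.take_append_of_le_length hk]; push_cast; omega

lemma IsFirstPassage.exists_eq_append_true (h : IsFirstPassage p (d + 1) l) :
    ∃ l', l = l' ++ [true] := by
  obtain rfl | ⟨l', b, rfl⟩ := l.eq_nil_or_concat
  · have := h.1; rw [height_nil] at this; omega
  · refine ⟨l', ?_⟩
    rw [List.concat_eq_append]
    cases b
    · have h1 := h.1
      have h2 := h.2 l'.length (by simp)
      simp only [List.concat_eq_append, height_append, height_singleton_false,
        List.take_append_of_le_length le_rfl, List.take_length] at h1 h2
      omega
    · rfl

lemma length_eq_of_height_eq (h : height p l = d) : l.length = (p + 1) * l.count false + d := by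
  rw [height_eq_iff] at h
  rw [← List.count_true_add_count_false l, h]
  ring

instance (d n : ℕ) : Finite {l // IsFirstPassage p d l ∧ l.count false = n} :=
  Set.Finite.to_subtype <| (List.finite_length_eq Bool ((p + 1) * n + d)).subset
    fun _ ⟨hl, hn⟩ => hn ▸ length_eq_of_height_eq hl.1

open scoped ENNReal

noncomputable def weight (x y : ℝ≥0∞) (l : List Bool) : ℝ≥0∞ :=
  x ^ l.count true * y ^ l.count false

lemma weight_append (x y : ℝ≥0∞) (l₁ l₂ : List Bool) :
    weight x y (l₁ ++ l₂) = weight x y l₁ * weight x y l₂ := by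
  simp only [weight, List.count_append, pow_add]; ring

variable (x y : ℝ≥0∞)

variable (p) in
noncomputable def firstPassageSeries (d : ℕ) : ℝ≥0∞ :=
  ∑' l : {l // IsFirstPassage p d l}, weight x y l

lemma firstPassageSeries_add (ha : 0 < a) :
    firstPassageSeries p x y (a + b) =
      firstPassageSeries p x y a * firstPassageSeries p x y b := by
  rw [firstPassageSeries, ← (IsFirstPassage.appendEquiv p ha).tsum_eq, firstPassageSeries,
    firstPassageSeries, ← ENNReal.tsum_mul_right, ENNReal.tsum_prod']
  refine tsum_congr fun u => ?_
  rw [← ENNReal.tsum_mul_left]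
  exact tsum_congr fun v => weight_append x y u v

lemma firstPassageSeries_eq_pow (hd : 0 < d) :
    firstPassageSeries p x y d = firstPassageSeries p x y 1 ^ d := by
  induction d, hd using Nat.le_induction with
  | base => rw [pow_one]
  | succ d hd ih => rw [pow_succ', ← ih, ← firstPassageSeries_add x y one_pos, add_comm]

variable (p) in
lemma firstPassageSeries_eq_tsum (d : ℕ) :
    firstPassageSeries p x y d = ∑' n : ℕ,
      Nat.card {l // IsFirstPassage p d l ∧ l.count false = n} * x ^ (p * n + d) * y ^ n := by
  rw [firstPassageSeries, ← (Equiv.sigmaFiberEquiv fun l : {l // IsFirstPassage p d l} =>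
    l.1.count false).tsum_eq, ENNReal.tsum_sigma']
  refine tsum_congr fun n => ?_
  calc _ = ∑' _ : {l : {l // IsFirstPassage p d l} // l.1.count false = n},
        x ^ (p * n + d) * y ^ n := tsum_congr fun l => by
          simp [weight, height_eq_iff.1 l.1.2.1, l.2]
    _ = _ := by
      rw [ENNReal.tsum_const, ENat.card_congr <| Equiv.subtypeSubtypeEquivSubtypeInter
        (IsFirstPassage p d) (·.count false = n), ENat.card_eq_coe_natCard, mul_assoc]
      rfl

lemma count_true_eq_iff {n : ℕ} (hl : l.length = (p + 1) * n + d) :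
    l.count true = p * n + d ↔ height p l = d ∧ l.count false = n := by
  have := List.count_true_add_count_false l
  rw [height_eq_iff]
  constructor
  · intro h
    have hn : l.count false = n := by rw [add_one_mul] at hl; omega
    exact ⟨by rw [h, hn], hn⟩
  · rintro ⟨h, rfl⟩; exact h

lemma card_filter_lt_eq_count_take {α : Type*} [DecidableEq α] {L : ℕ} (f : Fin L → α) (b : α)
    (k : ℕ) : #(univ.filter fun i : Fin L => (i : ℕ) < k ∧ f i = b) =
      ((List.ofFn f).take k).count b := by
  induction k with
  | zero => simp
  | succ k ih =>
    rw [List.take_add_one, List.count_append, ← ih, List.getElem?_ofFn]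
    split_ifs with hk
    · have : (univ.filter fun i : Fin L => (i : ℕ) < k + 1 ∧ f i = b) =
          (univ.filter fun i : Fin L => (i : ℕ) < k ∧ f i = b) ∪
            (if f ⟨k, hk⟩ = b then {⟨k, hk⟩} else ∅) := by
        ext i; split_ifs <;>
          simp only [mem_filter, mem_univ, true_and, mem_union, mem_singleton, Fin.ext_iff,
            notMem_empty, or_false] <;> grind
      rw [this, card_union_of_disjoint] <;> split_ifs <;> simp [*]
    · simp only [Option.toList_none, List.count_nil, add_zero]
      congr 1; ext i; simp only [mem_filter, mem_univ, true_and]; grind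

lemma natCard_subtype_fin_eq {α : Type*} {L : ℕ} {P : (Fin L → α) → Prop}
    {R : List α → Prop} (hPR : ∀ f, P f ↔ R (List.ofFn f)) (hR : ∀ l, R l → l.length = L) :
    Nat.card {f // P f} = Nat.card {l // R l} :=
  Nat.card_congr <|
    ((Equiv.vectorEquivFin α L).symm.subtypeEquiv fun f =>
      (hPR f).trans (iff_of_eq (congrArg R (List.Vector.toList_ofFn f).symm))).trans
      (Equiv.subtypeSubtypeEquivSubtype fun {l} => hR l)

variable (p) in
lemma strictCount_eq_natCard (hd : d ≠ 0) (n : ℕ) :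
    strictCount p d n = Nat.card {l // IsFirstPassage p d l ∧ l.count false = n} := by
  rw [strictCount, if_neg (by tauto)]
  refine natCard_subtype_fin_eq (fun f => ?_) fun l ⟨hl, hn⟩ => hn ▸ length_eq_of_height_eq hl.1
  simp only [upsIn, rightsIn, card_filter_lt_eq_count_take]
  generalize hl : List.ofFn f = l
  have hL : l.length = (p + 1) * n + d := hl ▸ List.length_ofFn
  rw [List.take_of_length_le hL.le, count_true_eq_iff hL, IsFirstPassage, hL]
  simp only [← height_lt_iff]
  refine ⟨fun ⟨⟨h, hn⟩, hlt⟩ => ⟨⟨h, fun k hk => ?_⟩, hn⟩,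
    fun ⟨⟨h, hlt⟩, hn⟩ => ⟨⟨h, hn⟩, fun k _ hk => hlt k hk⟩⟩
  rcases k.eq_zero_or_pos with rfl | hk0
  · simpa using Nat.pos_of_ne_zero hd
  · exact hlt k hk0 hk

variable (p) in
lemma weakCount_eq_natCard (d n : ℕ) :
    weakCount p d n = Nat.card {l // IsFirstPassage p (d + 1) l ∧ l.count false = n} := by
  rw [weakCount, natCard_subtype_fin_eq (R := fun l =>
    (height p l = d ∧ ∀ k ≤ l.length, height p (l.take k) ≤ d) ∧ l.count false = n)
    (fun f => ?_) fun l ⟨⟨h, _⟩, hn⟩ => hn ▸ length_eq_of_height_eq h]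
  · refine Nat.card_eq_of_bijective (fun l => ⟨l.1 ++ [true],
      isFirstPassage_append_true_iff.2 l.2.1, by simp [l.2.2]⟩) ⟨fun l l' h => ?_, fun l => ?_⟩
    · exact Subtype.ext (List.append_cancel_right (congrArg Subtype.val h))
    · obtain ⟨l', hl'⟩ := l.2.1.exists_eq_append_true
      have := l.2
      rw [hl'] at this
      exact ⟨⟨l', isFirstPassage_append_true_iff.1 this.1, by simpa using this.2⟩,
        Subtype.ext hl'.symm⟩
  · simp only [upsIn, rightsIn, card_filter_lt_eq_count_take]
    generalize hl : List.ofFn f = l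
    have hL : l.length = (p + 1) * n + d := hl ▸ List.length_ofFn
    rw [List.take_of_length_le hL.le, count_true_eq_iff hL, hL]
    simp only [← height_le_iff]
    tauto

open ENNReal in
lemma toReal_firstPassageSeries {β : ℝ} (hβ : 0 ≤ β) (d : ℕ) :
    (firstPassageSeries p (.ofReal (β / (β + 1))) (.ofReal (β + 1)⁻¹) d).toReal =
      ∑' n : ℕ, (Nat.card {l // IsFirstPassage p d l ∧ l.count false = n} : ℝ) *
        β ^ (p * n + d) / (β + 1) ^ ((p + 1) * n + d) := by
  rw [firstPassageSeries_eq_tsum, ENNReal.tsum_toReal_eq fun n => by finiteness]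
  refine tsum_congr fun n => ?_
  have : 0 < β + 1 := by linarith
  simp only [toReal_mul, toReal_pow, toReal_natCast, toReal_ofReal (div_nonneg hβ this.le),
    toReal_ofReal (inv_nonneg.2 this.le)]
  rw [div_pow, inv_pow, show (p + 1) * n + d = p * n + d + n by ring, pow_add]
  ring

lemma meetProb_eq_toReal_firstPassageSeries {β : ℝ} (hβ : 0 ≤ β) (hd : d ≠ 0) :
    meetProb β p d =
      (firstPassageSeries p (.ofReal (β / (β + 1))) (.ofReal (β + 1)⁻¹) d).toReal := by
  rw [meetProb, if_neg hd, toReal_firstPassageSeries hβ]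
  simp_rw [strictCount_eq_natCard p hd]

lemma crossProb_eq_toReal_firstPassageSeries {β : ℝ} (hβ : 0 ≤ β) (d : ℕ) :
    crossProb β p d =
      (firstPassageSeries p (.ofReal (β / (β + 1))) (.ofReal (β + 1)⁻¹) (d + 1)).toReal := by
  rw [crossProb, toReal_firstPassageSeries hβ]
  simp_rw [weakCount_eq_natCard p, ← add_assoc]

end LatticePath

open LatticePath in
theorem meetProb_pos_eq_general (β : ℝ) (hβ : 0 < β) (p : ℕ) (d : ℕ) (hd : 0 < d) :
    meetProb β p d = (crossProb β p 0) ^ d := by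
  rw [meetProb_eq_toReal_firstPassageSeries hβ.le hd.ne',
    crossProb_eq_toReal_firstPassageSeries hβ.le, firstPassageSeries_eq_pow _ _ hd,
    ENNReal.toReal_pow]

theorem meetProb_pos_eq (β : ℝ) (hβ : 0 < β) (p : ℕ) (hp : 0 < p) (d : ℕ) (hd : 0 < d) :
    meetProb β p d = (crossProb β p 0) ^ d :=
  meetProb_pos_eq_general β hβ p d hd
end
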